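/- Any positive integer cycle Z supported on a chain of rational curves with self-intersections (-2,-5,-2,-2,-2,-2) has arithmetic genus p_a(Z) = 1 + (1/2)Z.(Z + K) ≤ 0, where K.E_i = -2 - E_i² for each component. -/
import Mathlib

set_option maxHeartbeats 1000000

open Matrix

def chainMatrix6 : Matrix (Fin 6) (Fin 6) ℚ :=
  !![-2, 1, 0, 0, 0, 0;
      1,-5, 1, 0, 0, 0;
      0, 1,-2, 1, 0, 0;
      0, 0, 1,-2, 1, 0;
      0, 0, 0, 1,-2, 1;
      0, 0, 0, 0, 1,-2]

/-- k_i = -2 - d_i for d = (-2,-5,-2,-2,-2,-2). -/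
def kVec6 : Fin 6 → ℚ := ![0, 3, 0, 0, 0, 0]

lemma chain_key (a b c d e f : ℤ) (ha : 0 ≤ a) (hb : 0 ≤ b) (hc : 0 ≤ c)
    (hd : 0 ≤ d) (he : 0 ≤ e) (hf : 0 ≤ f)
    (hne : ¬(a = 0 ∧ b = 0 ∧ c = 0 ∧ d = 0 ∧ e = 0 ∧ f = 0)) :
    2 ≤ a^2 + (a-b)^2 + (b-c)^2 + (c-d)^2 + (d-e)^2 + (e-f)^2 + f^2 + 3*b*(b-1) := by
  set T := a^2 + (a-b)^2 + (b-c)^2 + (c-d)^2 + (d-e)^2 + (e-f)^2 + f^2 + 3*b*(b-1) with hT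
  clear_value T
  have hbb : 0 ≤ b*(b-1) := by
    rcases Int.lt_or_le b 1 with h | h
    · have : b = 0 := by omega
      simp [this]
    · nlinarith
  have hT0 : 0 ≤ T := by
    rw [hT]
    nlinarith [sq_nonneg a, sq_nonneg (a-b), sq_nonneg (b-c),
      sq_nonneg (c-d), sq_nonneg (d-e), sq_nonneg (e-f), sq_nonneg f]
  have hTne : T ≠ 0 := by
    intro h
    have hsum : a^2 + (a-b)^2 + (b-c)^2 + (c-d)^2 + (d-e)^2 + (e-f)^2 + f^2 + 3*b*(b-1) = 0 := by
      rw [← hT, h]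
    have h1 : a^2 = 0 := by
      nlinarith [sq_nonneg a, sq_nonneg (a-b), sq_nonneg (b-c),
        sq_nonneg (c-d), sq_nonneg (d-e), sq_nonneg (e-f), sq_nonneg f]
    have h2 : (a-b)^2 = 0 := by
      nlinarith [sq_nonneg a, sq_nonneg (a-b), sq_nonneg (b-c),
        sq_nonneg (c-d), sq_nonneg (d-e), sq_nonneg (e-f), sq_nonneg f]
    have h3 : (b-c)^2 = 0 := by
      nlinarith [sq_nonneg a, sq_nonneg (a-b), sq_nonneg (b-c),
        sq_nonneg (c-d), sq_nonneg (d-e), sq_nonneg (e-f), sq_nonneg f]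
    have h4 : (c-d)^2 = 0 := by
      nlinarith [sq_nonneg a, sq_nonneg (a-b), sq_nonneg (b-c),
        sq_nonneg (c-d), sq_nonneg (d-e), sq_nonneg (e-f), sq_nonneg f]
    have h5 : (d-e)^2 = 0 := by
      nlinarith [sq_nonneg a, sq_nonneg (a-b), sq_nonneg (b-c),
        sq_nonneg (c-d), sq_nonneg (d-e), sq_nonneg (e-f), sq_nonneg f]
    have h6 : (e-f)^2 = 0 := by
      nlinarith [sq_nonneg a, sq_nonneg (a-b), sq_nonneg (b-c),
        sq_nonneg (c-d), sq_nonneg (d-e), sq_nonneg (e-f), sq_nonneg f]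
    have e1 : a = 0 := sq_eq_zero_iff.mp h1
    have e2 : a - b = 0 := sq_eq_zero_iff.mp h2
    have e3 : b - c = 0 := sq_eq_zero_iff.mp h3
    have e4 : c - d = 0 := sq_eq_zero_iff.mp h4
    have e5 : d - e = 0 := sq_eq_zero_iff.mp h5
    have e6 : e - f = 0 := sq_eq_zero_iff.mp h6
    exact hne ⟨by omega, by omega, by omega, by omega, by omega, by omega⟩
  have heven : Even T := by
    obtain ⟨m, hm⟩ := Int.even_mul_succ_self b
    refine ⟨a^2 + 2*b^2 + c^2 + d^2 + e^2 + f^2 - a*b - b*c - c*d - d*e - e*f - 2*b + m, ?_⟩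
    rw [hT]
    linear_combination hm
  obtain ⟨m, hm⟩ := heven
  omega

lemma chain_dot (z : Fin 6 → ℤ) :
    ((fun i => (z i : ℚ)) ⬝ᵥ chainMatrix6.mulVec (fun i => (z i : ℚ))
      + kVec6 ⬝ᵥ (fun i => (z i : ℚ))) =
    -2*(z 0:ℚ)^2 - 5*(z 1:ℚ)^2 - 2*(z 2:ℚ)^2 - 2*(z 3:ℚ)^2 - 2*(z 4:ℚ)^2 - 2*(z 5:ℚ)^2
     + 2*(z 0:ℚ)*(z 1:ℚ) + 2*(z 1:ℚ)*(z 2:ℚ) + 2*(z 2:ℚ)*(z 3:ℚ) + 2*(z 3:ℚ)*(z 4:ℚ)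
     + 2*(z 4:ℚ)*(z 5:ℚ) + 3*(z 1:ℚ) := by
  have e1 : Fin.succ (2 : Fin 3) = 3 := by decide
  have e2 : Fin.succ (2 : Fin 4) = 3 := by decide
  have e3 : Fin.succ (2 : Fin 5) = 3 := by decide
  have e4 : Fin.succ (3 : Fin 4) = 4 := by decide
  have e5 : Fin.succ (3 : Fin 5) = 4 := by decide
  have e6 : Fin.succ (4 : Fin 5) = 5 := by decide
  have h3 : (Fin.succ 2 : Fin 6) = 3 := rfl
  have h4 : (Fin.succ 3 : Fin 6) = 4 := rfl
  have h5 : (Fin.succ 4 : Fin 6) = 5 := rfl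
  simp [chainMatrix6, kVec6, mulVec, dotProduct, Fin.sum_univ_succ, Matrix.cons_val_zero,
    Matrix.cons_val_succ, h3, h4, h5, e1, e2, e3, e4, e5, e6]
  ring

/-- every nonzero effective cycle z on the chain with
self-intersections (-2,-5,-2,-2,-2,-2) has arithmetic genus
p_a(z) = 1 + (1/2)(zᵀMz + k·z) ≤ 0. -/
theorem arithmetic_genus_nonpos (z : Fin 6 → ℤ) (hz : ∀ i, 0 ≤ z i) (hne : z ≠ 0) :
    1 + (1/2 : ℚ) * ((fun i => (z i : ℚ)) ⬝ᵥ chainMatrix6.mulVec (fun i => (z i : ℚ))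
      + kVec6 ⬝ᵥ (fun i => (z i : ℚ))) ≤ 0 := by
  have hne' : ¬(z 0 = 0 ∧ z 1 = 0 ∧ z 2 = 0 ∧ z 3 = 0 ∧ z 4 = 0 ∧ z 5 = 0) := by
    intro ⟨h0, h1, h2, h3, h4, h5⟩
    apply hne
    funext i
    fin_cases i <;> assumption
  have key := chain_key (z 0) (z 1) (z 2) (z 3) (z 4) (z 5)
    (hz 0) (hz 1) (hz 2) (hz 3) (hz 4) (hz 5) hne'
  have keyQ : (2 : ℚ) ≤ ((z 0 : ℚ)^2 + ((z 0:ℚ)-(z 1:ℚ))^2 + ((z 1:ℚ)-(z 2:ℚ))^2 +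
      ((z 2:ℚ)-(z 3:ℚ))^2 + ((z 3:ℚ)-(z 4:ℚ))^2 + ((z 4:ℚ)-(z 5:ℚ))^2 + (z 5:ℚ)^2 +
      3*(z 1:ℚ)*((z 1:ℚ)-1)) := by exact_mod_cast key
  rw [chain_dot]
  nlinarith [keyQ]
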